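/- arXiv:2410.09214 — 2 statements merged into one kernel-verified Lean document; each statement's English description precedes it below -/
import Mathlib

section
/- Let Ω ⊆ ℝⁿ be open and F ∈ DM^ext(Ω) such that the support of the total variation measure |F| is a compact subset of Ω. Then (div F)(Ω) = 0. -/
open MeasureTheory Topology Metric Filter Set
open scoped ENNReal RealInnerProductSpace NNReal

noncomputable section

/-- Euclidean space `ℝⁿ`. -/
abbrev En (n : ℕ) : Type := EuclideanSpace ℝ (Fin n)

/-- Integral of a (real-valued) function against a finite signed measure. -/
def sintg {α : Type*} [MeasurableSpace α] (s : SignedMeasure α) (f : α → ℝ) : ℝ :=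
  ∫ x, f x ∂s.toJordanDecomposition.posPart - ∫ x, f x ∂s.toJordanDecomposition.negPart

/-- Integral of a function against a finite signed measure over a set `E`. -/
def sintgOn {α : Type*} [MeasurableSpace α] (s : SignedMeasure α) (f : α → ℝ) (E : Set α) : ℝ :=
  ∫ x in E, f x ∂s.toJordanDecomposition.posPart -
    ∫ x in E, f x ∂s.toJordanDecomposition.negPart

/-- A finite `ℝⁿ`-valued (Radon) measure, given by its polar decomposition:
a finite nonnegative total-variation measure together with a unit-norm polar density. -/
structure RnMeasure (n : ℕ) where
  var : Measure (En n)
  finite : IsFiniteMeasure var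
  polar : En n → En n
  polar_meas : Measurable polar
  polar_norm : ∀ᵐ x ∂var, ‖polar x‖ = 1

/-- The (vector) value of the vector measure `F` on a set `A`. -/
def RnMeasure.val {n : ℕ} (F : RnMeasure n) (A : Set (En n)) : En n :=
  ∫ x in A, F.polar x ∂F.var

/-- `∫_E G(x) · dF(x)`, the integral of a vector field against the vector measure `F` on `E`. -/
def RnMeasure.pairOn {n : ℕ} (F : RnMeasure n) (E : Set (En n)) (G : En n → En n) : ℝ :=
  ∫ x in E, ⟪G x, F.polar x⟫ ∂F.var

/-- `C¹` test functions compactly supported in `Ω`. -/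
def C1c {n : ℕ} (Ω : Set (En n)) (φ : En n → ℝ) : Prop :=
  ContDiff ℝ 1 φ ∧ HasCompactSupport φ ∧ tsupport φ ⊆ Ω

/-- Continuous test functions compactly supported in `Ω`. -/
def Cc {n : ℕ} (Ω : Set (En n)) (ψ : En n → ℝ) : Prop :=
  Continuous ψ ∧ HasCompactSupport ψ ∧ tsupport ψ ⊆ Ω

/-- `F ∈ DM^ext(Ω)`: `F` is a finite `ℝⁿ`-valued Radon measure concentrated on `Ω` whose
distributional divergence is the finite signed Radon measure `divF` concentrated on `Ω`. -/
def IsDMext {n : ℕ} (Ω : Set (En n)) (F : RnMeasure n) (divF : SignedMeasure (En n)) : Prop :=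
  F.var Ωᶜ = 0 ∧ divF.totalVariation Ωᶜ = 0 ∧
    ∀ φ : En n → ℝ, C1c Ω φ →
      F.pairOn Set.univ (fun x => gradient φ x) = - sintg divF φ

/-- A standard mollifier on `ℝⁿ`. -/
structure Mollifier (n : ℕ) where
  ρ : En n → ℝ
  smooth : ContDiff ℝ (⊤ : ℕ∞) ρ
  nonneg : ∀ x, 0 ≤ ρ x
  supp : tsupport ρ ⊆ Metric.closedBall 0 1
  total : ∫ x, ρ x = 1

/-- The mollification `f ∗ ρ_δ`, where `ρ_δ(y) = δ⁻ⁿ ρ(y/δ)`. -/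
def mollify {n : ℕ} (ρ : Mollifier n) (δ : ℝ) (f : En n → ℝ) (x : En n) : ℝ :=
  ∫ y, ((δ ^ n)⁻¹ * ρ.ρ (δ⁻¹ • y)) * f (x - y)

/-- `G` is the pairing measure `∇f·F‾` on `Ω`: a finite signed measure concentrated on `Ω`
with `∫ ψ dG = lim_{δ→0} ∫ ψ ∇(f ∗ ρ_δ) · dF` for every `ψ ∈ C_c(Ω)`. -/
def IsPairing {n : ℕ} (Ω : Set (En n)) (F : RnMeasure n) (f : En n → ℝ)
    (G : SignedMeasure (En n)) : Prop :=
  G.totalVariation Ωᶜ = 0 ∧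
  ∀ (ρ : Mollifier n) (ψ : En n → ℝ), Cc Ω ψ →
    Tendsto (fun δ : ℝ => F.pairOn Set.univ (fun x => ψ x • gradient (mollify ρ δ f) x))
      (𝓝[>] (0:ℝ)) (𝓝 (sintg G ψ))

/-- A function of class `W^{1,∞}(Ω)`: essentially bounded, with an essentially bounded
weak gradient; we record a continuous representative together with its weak gradient. -/
structure W1inf (n : ℕ) (Ω : Set (En n)) where
  f : En n → ℝ
  grad : En n → En n
  f_meas : Measurable f
  grad_meas : Measurable grad
  f_contOn : ContinuousOn f Ω
  f_bdd : ∃ C : ℝ, ∀ x ∈ Ω, |f x| ≤ C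
  grad_bdd : ∃ C : ℝ, ∀ x ∈ Ω, ‖grad x‖ ≤ C
  weak_grad : ∀ ψ : En n → ℝ, C1c Ω ψ → ∀ v : En n,
    ∫ x in Ω, f x * fderiv ℝ ψ x v = - ∫ x in Ω, ⟪grad x, v⟫ * ψ x

/-- The normal trace `⟨F·ν, f⟩_{∂E} = −∫_E f d(div F) − (∇f·F‾)(E)` of a divergence-measure
field on `∂E`, tested against a `W^{1,∞}` function `f` with pairing measure `G = ∇f·F‾`. -/
def traceW {n : ℕ} (divF G : SignedMeasure (En n)) (E : Set (En n)) (f : En n → ℝ) : ℝ :=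
  - sintgOn divF f E - G E

/-- The normal trace `⟨F·ν, φ⟩_{∂E} = −∫_E ∇φ · dF − ∫_E φ d(div F)` for `φ ∈ C¹_c(Ω)`. -/
def traceC1 {n : ℕ} (F : RnMeasure n) (divF : SignedMeasure (En n)) (E : Set (En n))
    (φ : En n → ℝ) : ℝ :=
  - F.pairOn E (fun x => gradient φ x) - sintgOn divF φ E

/-- The interior set `U^ε = {x ∈ U : dist(x, ∂U) > ε}`. -/
def innerSet {n : ℕ} (U : Set (En n)) (ε : ℝ) : Set (En n) :=
  {x ∈ U | ε < Metric.infDist x (frontier U)}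

/-- Weak-* convergence of (nonnegative) measures along a filter, tested against `C_c(Ω)`. -/
def WeakStar {n : ℕ} (Ω : Set (En n)) {ι : Type*} (l : Filter ι)
    (κ : ι → Measure (En n)) (ν : Measure (En n)) : Prop :=
  ∀ ψ : En n → ℝ, Cc Ω ψ →
    Tendsto (fun i => ∫ x, ψ x ∂(κ i)) l (𝓝 (∫ x, ψ x ∂ν))

/-- `liminf_{ε→0⁺} μ(U ∖ closure(U^ε))/ε < ∞`. -/
def liminfCond {n : ℕ} (μ : Measure (En n)) (U : Set (En n)) : Prop :=
  Filter.liminf (fun ε : ℝ => μ (U \ closure (innerSet U ε)) / ENNReal.ofReal ε)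
    (𝓝[>] (0:ℝ)) < ⊤

/-- `limsup_{ε→0⁺} μ(U ∖ closure(U^ε))/ε < ∞`. -/
def limsupCond {n : ℕ} (μ : Measure (En n)) (U : Set (En n)) : Prop :=
  Filter.limsup (fun ε : ℝ => μ (U \ closure (innerSet U ε)) / ENNReal.ofReal ε)
    (𝓝[>] (0:ℝ)) < ⊤

/-- The class `O_μ` of open sets `U ⋐ Ω` with `liminf_{ε→0} μ(U ∖ closure(U^ε))/ε < ∞`. -/
def Omu {n : ℕ} (Ω : Set (En n)) (μ : Measure (En n)) : Set (Set (En n)) :=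
  {U | IsOpen U ∧ IsCompact (closure U) ∧ closure U ⊆ Ω ∧ liminfCond μ U}

/-- `ν` is a limiting measure `μ^{n−1}_U`, i.e. a weak-* limit of `(1/ε_k) μ ⌞ (U ∖ closure(U^{ε_k}))`
along some sequence `ε_k ↓ 0`. -/
def IsLimitMeasure {n : ℕ} (Ω : Set (En n)) (μ : Measure (En n)) (U : Set (En n))
    (ν : Measure (En n)) : Prop :=
  ∃ εs : ℕ → ℝ, (∀ k, 0 < εs k) ∧ StrictAnti εs ∧ Tendsto εs atTop (𝓝 0) ∧
    WeakStar Ω atTop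
      (fun k => (ENNReal.ofReal (εs k))⁻¹ • μ.restrict (U \ closure (innerSet U (εs k)))) ν

/-- A Cauchy flux on `Ω` with production measure `production` and bounding measure `bounding`. -/
structure CauchyFlux (n : ℕ) (Ω : Set (En n)) where
  flux : Set (En n) → Set (En n) → ℝ
  production : SignedMeasure (En n)
  production_conc : production.totalVariation Ωᶜ = 0
  bounding : Measure (En n)
  bounding_fin : IsFiniteMeasure bounding
  bounding_conc : bounding Ωᶜ = 0
  balance : ∀ U : Set (En n), IsOpen U → IsCompact (closure U) → closure U ⊆ Ω →
    flux U (frontier U) = production U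
  additive : ∀ U ∈ Omu Ω bounding, ∀ S T : Set (En n), MeasurableSet S → MeasurableSet T →
    S ⊆ frontier U → T ⊆ frontier U → Disjoint S T → flux U (S ∪ T) = flux U S + flux U T
  localized : ∀ U ∈ Omu Ω bounding, ∀ V ∈ Omu Ω bounding, ∀ A : Set (En n), IsOpen A → A ⊆ Ω →
    A ∩ U = A ∩ V → flux U (A ∩ frontier U) = flux V (A ∩ frontier V)
  bounded : ∀ U ∈ Omu Ω bounding, ∀ ν : Measure (En n), IsLimitMeasure Ω bounding U ν →
    ∀ S : Set (En n), MeasurableSet S → S ⊆ frontier U → |flux U S| ≤ (ν S).toReal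
open scoped Manifold in
lemma cutoff_aux {n : ℕ} (Ω : Set (En n)) (hΩ : IsOpen Ω) (L : Set (En n)) (hL : IsCompact L)
    (hLΩ : L ⊆ Ω) : ∃ φ : En n → ℝ, C1c Ω φ ∧ (∀ x, φ x ∈ Icc (0:ℝ) 1) ∧
      (∀ x ∈ L, φ x = 1) ∧ (∀ x ∈ L, gradient φ x = 0) := by
  obtain ⟨C, hC, hLC, hCΩ⟩ := exists_compact_between hL hΩ hLΩ
  obtain ⟨f, h1, h0, hf⟩ := exists_contMDiffMap_one_nhds_of_subset_interior (𝓘(ℝ, En n)) (n := (⊤ : ℕ∞))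
    hL.isClosed hLC
  have hsmooth := contMDiff_iff_contDiff.mp f.contMDiff
  have hsupp : tsupport f ⊆ C := by
    apply closure_minimal _ hC.isClosed
    intro x hx
    by_contra hxc
    exact hx (h0 x hxc)
  obtain ⟨V, hVmem, hV1⟩ := h1.exists_mem
  obtain ⟨U, hUopen, hLU, hUV⟩ := mem_nhdsSet_iff_exists.mp hVmem
  refine ⟨f, ⟨hsmooth.of_le (by exact_mod_cast le_top),
    HasCompactSupport.of_support_subset_isCompact hC
    ((subset_closure).trans hsupp), hsupp.trans hCΩ⟩, hf, fun x hx => hV1 _ (hUV (hLU hx)), ?_⟩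
  intro x hx
  have hfe : ⇑f =ᶠ[𝓝 x] fun _ => (1:ℝ) := by
    filter_upwards [hUopen.mem_nhds (hLU hx)] with y hy using hV1 _ (hUV hy)
  have : fderiv ℝ f x = 0 := by
    rw [hfe.fderiv_eq, fderiv_fun_const]; rfl
  rw [gradient, this]; simp

/-- **Lemma 2.9.** If `F ∈ DM^ext(Ω)` and the support of `|F|` is a compact subset of `Ω`,
then `(div F)(Ω) = 0`. -/
theorem stmt2 {n : ℕ} (hn : 2 ≤ n) (Ω : Set (En n)) (hΩ : IsOpen Ω)
    (F : RnMeasure n) (divF : SignedMeasure (En n)) (hF : IsDMext Ω F divF)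
    -- the support of `|F|` is a compact subset of `Ω`
    (K : Set (En n)) (hK : IsCompact K) (hKΩ : K ⊆ Ω) (hconc : F.var Kᶜ = 0) :
    divF Ω = 0 := by
  obtain ⟨hFvar, hdivconc, hweak⟩ := hF
  set μp := divF.toJordanDecomposition.posPart with hμp
  set μn := divF.toJordanDecomposition.negPart with hμn
  have : IsFiniteMeasure μp := inferInstance
  have : IsFiniteMeasure μn := inferInstance
  have htv : μp Ωᶜ + μn Ωᶜ = 0 := by
    rw [← Measure.add_apply]; exact hdivconc
  have hp0 : μp Ωᶜ = 0 := by
    rcases add_eq_zero.mp htv with ⟨h, _⟩; exact h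
  have hn0 : μn Ωᶜ = 0 := by
    rcases add_eq_zero.mp htv with ⟨_, h⟩; exact h
  -- exhausting compact sets containing K
  set L : ℕ → Set (En n) := fun m =>
    K ∪ (Metric.closedBall 0 m \ Metric.thickening (1/((m:ℝ)+1)) Ωᶜ) with hLdef
  have hLcomp : ∀ m, IsCompact (L m) := by
    intro m
    refine hK.union ?_
    have : Metric.closedBall (0 : En n) m \ Metric.thickening (1/((m:ℝ)+1)) Ωᶜ
        = Metric.closedBall 0 m ∩ (Metric.thickening (1/((m:ℝ)+1)) Ωᶜ)ᶜ := rfl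
    rw [this]
    exact (isCompact_closedBall _ _).inter_right
      (Metric.isOpen_thickening).isClosed_compl
  have hLΩ : ∀ m, L m ⊆ Ω := by
    intro m x hx
    rcases hx with hx | hx
    · exact hKΩ hx
    · by_contra hxo
      have hδ : (0:ℝ) < 1/((m:ℝ)+1) := by positivity
      exact hx.2 (Metric.self_subset_thickening hδ Ωᶜ hxo)
  have hKL : ∀ m, K ⊆ L m := fun m => subset_union_left
  choose φ hC1 hIcc h1 hgrad using fun m => cutoff_aux Ω hΩ (L m) (hLcomp m) (hLΩ m)
  -- the pairing with each φ m vanishes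
  have hpair : ∀ m, F.pairOn Set.univ (fun x => gradient (φ m) x) = 0 := by
    intro m
    rw [RnMeasure.pairOn, Measure.restrict_univ]
    apply integral_eq_zero_of_ae
    have hK_ae : ∀ᵐ x ∂F.var, x ∈ K := by
      rw [ae_iff]
      convert hconc using 2; rfl
    filter_upwards [hK_ae] with x hx
    rw [hgrad m x (hKL m hx)]
    simp
  have hsintg : ∀ m, ∫ x, φ m x ∂μp = ∫ x, φ m x ∂μn := by
    intro m
    have := hweak (φ m) (hC1 m)
    rw [hpair m] at this
    have h0 : sintg divF (φ m) = 0 := by linarith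
    rw [sintg] at h0
    linarith
  -- dominated convergence to 1 on Ω
  have hptwise : ∀ x ∈ Ω, ∀ᶠ m in atTop, φ m x = 1 := by
    intro x hx
    have hpos : 0 < EMetric.infEdist x Ωᶜ := by
      rw [show EMetric.infEdist x Ωᶜ = Metric.infEDist x Ωᶜ from rfl, EMetric.infEdist_pos_iff_notMem_closure, hΩ.isClosed_compl.closure_eq]
      simpa using hx
    have htend : Tendsto (fun m : ℕ => ENNReal.ofReal (1/((m:ℝ)+1))) atTop (𝓝 0) := by
      rw [← ENNReal.ofReal_zero]
      apply ENNReal.tendsto_ofReal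
      have := tendsto_one_div_add_atTop_nhds_zero_nat (𝕜 := ℝ)
      simpa using this
    have h1' : ∀ᶠ m : ℕ in atTop, ENNReal.ofReal (1/((m:ℝ)+1)) < EMetric.infEdist x Ωᶜ :=
      htend.eventually_lt_const hpos
    have h2' : ∀ᶠ m : ℕ in atTop, ‖x‖ ≤ (m : ℝ) :=
      eventually_atTop.mpr ⟨⌈‖x‖⌉₊, fun m hm => le_trans (Nat.le_ceil _) (by exact_mod_cast hm)⟩
    filter_upwards [h1', h2'] with m hm1 hm2
    apply h1 m
    right
    constructor
    · simpa [Metric.mem_closedBall, dist_eq_norm] using hm2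
    · intro hmem
      rw [Metric.mem_thickening_iff_infEdist_lt] at hmem
      exact absurd hmem (not_lt.mpr (le_of_lt hm1))
  have hconv : ∀ (μ : Measure (En n)), IsFiniteMeasure μ → μ Ωᶜ = 0 →
      Tendsto (fun m => ∫ x, φ m x ∂μ) atTop (𝓝 (μ Set.univ).toReal) := by
    intro μ hfin h0
    have : (μ Set.univ).toReal = ∫ x, (1:ℝ) ∂μ := by
      rw [integral_const]; simp; rfl
    rw [this]
    apply tendsto_integral_of_dominated_convergence (fun _ => (1:ℝ))
    · exact fun m => ((hC1 m).1.continuous).aestronglyMeasurable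
    · exact integrable_const 1
    · intro m
      filter_upwards with x
      rcases hIcc m x with ⟨ha, hb⟩
      rw [Real.norm_eq_abs, abs_le]
      constructor <;> linarith
    · have hΩae : ∀ᵐ x ∂μ, x ∈ Ω := by
        rw [ae_iff]; convert h0 using 2; rfl
      filter_upwards [hΩae] with x hx
      exact Filter.Tendsto.congr' (by filter_upwards [hptwise x hx] with m hm using hm.symm)
        tendsto_const_nhds
  have hlimp := hconv μp inferInstance hp0
  have hlimn := hconv μn inferInstance hn0
  have heq : (μp Set.univ).toReal = (μn Set.univ).toReal :=
    tendsto_nhds_unique (hlimp.congr hsintg) hlimn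
  -- conclude
  have hΩm : MeasurableSet Ω := hΩ.measurableSet
  have hdiv : divF Ω = (μp Ω).toReal - (μn Ω).toReal := by
    conv_lhs => rw [← divF.toSignedMeasure_toJordanDecomposition]
    rw [JordanDecomposition.toSignedMeasure, VectorMeasure.sub_apply,
      Measure.toSignedMeasure_apply_measurable hΩm, Measure.toSignedMeasure_apply_measurable hΩm]; rfl
  have hpΩ : μp Ω = μp Set.univ := by
    have := measure_add_measure_compl (μ := μp) hΩm
    rw [hp0, add_zero] at this
    exact this
  have hnΩ : μn Ω = μn Set.univ := by
    have := measure_add_measure_compl (μ := μn) hΩm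
    rw [hn0, add_zero] at this
    exact this
  rw [hdiv, hpΩ, hnΩ, heq, sub_self]
end
end

section
/- Let Ω ⊆ ℝⁿ be open, F ∈ DM^ext(Ω), and E ⋐ Ω a Borel set. Then for every φ ∈ C¹_c(Ω), |⟨F·ν, φ⟩_{∂E}| ≤ ‖φ‖_{L^∞(Ω)} |div F|(Ω) + ‖∇φ‖_{L^∞(Ω)} |F|(Ω) (so the normal trace is a distribution of order at most 1); moreover ⟨F·ν, φ⟩_{∂E} = 0 for every φ ∈ C¹_c(Ω) whose support is disjoint from ∂E, i.e., the normal trace is supported on ∂E. -/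
open MeasureTheory Topology Metric Filter Set
open scoped ENNReal RealInnerProductSpace NNReal

noncomputable section

/-- **Lemma 2.11.** For `F ∈ DM^ext(Ω)` and a Borel set `E ⋐ Ω`, the normal trace
`⟨F·ν, ·⟩_{∂E}` is a distribution of order at most `1` supported on `∂E`. -/
theorem stmt4 {n : ℕ} (hn : 2 ≤ n) (Ω : Set (En n)) (hΩ : IsOpen Ω)
    (F : RnMeasure n) (divF : SignedMeasure (En n)) (hF : IsDMext Ω F divF)
    (E : Set (En n)) (hE : MeasurableSet E) (hEc : IsCompact (closure E))
    (hEΩ : closure E ⊆ Ω) (φ : En n → ℝ) (hφ : C1c Ω φ) :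
    -- order-1 bound
    (∀ C₁ C₂ : ℝ, (∀ x ∈ Ω, |φ x| ≤ C₁) → (∀ x ∈ Ω, ‖gradient φ x‖ ≤ C₂) →
      |traceC1 F divF E φ| ≤ C₁ * (divF.totalVariation Ω).toReal + C₂ * (F.var Ω).toReal) ∧
    -- supported on `∂E`
    (Disjoint (tsupport φ) (frontier E) → traceC1 F divF E φ = 0) := by
  haveI := F.finite
  have hEsub : E ⊆ Ω := (subset_closure.trans hEΩ)
  set pos := divF.toJordanDecomposition.posPart with hpos
  set neg := divF.toJordanDecomposition.negPart with hneg
  constructor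
  · intro C₁ C₂ hC₁ hC₂
    rcases Ω.eq_empty_or_nonempty with hΩe | hΩne
    · have hEe : E = ∅ := eq_empty_of_subset_empty (hΩe ▸ hEsub)
      have htv : divF.totalVariation Ω = 0 := by
        simp [hΩe]
      have hvar : F.var Ω = 0 := by simp [hΩe]
      simp [traceC1, RnMeasure.pairOn, sintgOn, hEe, htv, hvar]
    · obtain ⟨x₀, hx₀⟩ := hΩne
      have hC₁0 : 0 ≤ C₁ := le_trans (abs_nonneg _) (hC₁ x₀ hx₀)
      have hC₂0 : 0 ≤ C₂ := le_trans (norm_nonneg _) (hC₂ x₀ hx₀)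
      -- bound the pairing term
      have hA : |F.pairOn E (fun x => gradient φ x)| ≤ C₂ * (F.var Ω).toReal := by
        have h1 : |F.pairOn E (fun x => gradient φ x)| ≤ C₂ * (F.var E).toReal := by
          have := norm_setIntegral_le_of_norm_le_const_ae' (μ := F.var)
            (f := fun x => ⟪gradient φ x, F.polar x⟫) (s := E) (C := C₂)
            (measure_lt_top _ _) ?_
          · simpa [RnMeasure.pairOn, measureReal_def] using this
          · filter_upwards [F.polar_norm] with x hx hxE
            calc ‖⟪gradient φ x, F.polar x⟫‖ ≤ ‖gradient φ x‖ * ‖F.polar x‖ :=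
                  abs_real_inner_le_norm _ _
              _ = ‖gradient φ x‖ := by rw [hx, mul_one]
              _ ≤ C₂ := hC₂ x (hEsub hxE)
        refine h1.trans (mul_le_mul_of_nonneg_left ?_ hC₂0)
        exact ENNReal.toReal_mono (measure_ne_top _ _) (measure_mono hEsub)
      -- bound the divergence term
      haveI : IsFiniteMeasure divF.totalVariation := by
        unfold SignedMeasure.totalVariation; infer_instance
      have htvfin : ∀ s : Set (En n), divF.totalVariation s ≠ ⊤ := fun s => measure_ne_top _ _
      have hB : |sintgOn divF φ E| ≤ C₁ * (divF.totalVariation Ω).toReal := by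
        have hp : |∫ x in E, φ x ∂pos| ≤ C₁ * (pos E).toReal := by
          simpa [Real.norm_eq_abs, measureReal_def] using
            norm_setIntegral_le_of_norm_le_const_ae' (μ := pos) (f := φ) (s := E) (C := C₁)
              (measure_lt_top _ _)
              (Eventually.of_forall fun x hxE => by
                simpa [Real.norm_eq_abs] using hC₁ x (hEsub hxE))
        have hq : |∫ x in E, φ x ∂neg| ≤ C₁ * (neg E).toReal := by
          simpa [Real.norm_eq_abs, measureReal_def] using
            norm_setIntegral_le_of_norm_le_const_ae' (μ := neg) (f := φ) (s := E) (C := C₁)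
              (measure_lt_top _ _)
              (Eventually.of_forall fun x hxE => by
                simpa [Real.norm_eq_abs] using hC₁ x (hEsub hxE))
        have hsum : (pos E).toReal + (neg E).toReal ≤ (divF.totalVariation Ω).toReal := by
          have h1 : pos E + neg E ≤ divF.totalVariation Ω := by
            refine le_trans (le_of_eq ?_) (measure_mono hEsub)
            simp [SignedMeasure.totalVariation, Measure.add_apply]
            rfl
          calc (pos E).toReal + (neg E).toReal
              = (pos E + neg E).toReal := (ENNReal.toReal_add (measure_ne_top _ _)
                (measure_ne_top _ _)).symm
            _ ≤ (divF.totalVariation Ω).toReal :=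
                ENNReal.toReal_mono (htvfin Ω) h1
        calc |sintgOn divF φ E| ≤ |∫ x in E, φ x ∂pos| + |∫ x in E, φ x ∂neg| :=
              abs_sub _ _
          _ ≤ C₁ * (pos E).toReal + C₁ * (neg E).toReal := add_le_add hp hq
          _ = C₁ * ((pos E).toReal + (neg E).toReal) := by ring
          _ ≤ C₁ * (divF.totalVariation Ω).toReal := mul_le_mul_of_nonneg_left hsum hC₁0
      calc |traceC1 F divF E φ|
          = |F.pairOn E (fun x => gradient φ x) + sintgOn divF φ E| := by
            rw [traceC1]; rw [abs_sub_comm]; ring_nf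
        _ ≤ |F.pairOn E (fun x => gradient φ x)| + |sintgOn divF φ E| := abs_add_le _ _
        _ ≤ C₂ * (F.var Ω).toReal + C₁ * (divF.totalVariation Ω).toReal := add_le_add hA hB
        _ = C₁ * (divF.totalVariation Ω).toReal + C₂ * (F.var Ω).toReal := by ring
  · intro hdisj
    set U := interior E with hU
    have hK : IsCompact (tsupport φ ∩ closure E) := hEc.inter_left (isClosed_tsupport φ)
    have hKU : tsupport φ ∩ closure E ⊆ U := by
      rintro x ⟨hx1, hx2⟩
      by_contra hxi
      exact (disjoint_left.1 hdisj hx1) ⟨hx2, hxi⟩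
    obtain ⟨L, hLc, hKL, hLU⟩ := exists_compact_between hK isOpen_interior hKU
    obtain ⟨θ, hθ0, hθ1, hθI⟩ := exists_contMDiffMap_zero_one_of_isClosed (modelWithCornersSelf ℝ (En n)) (n := (⊤ : ℕ∞))
      (isOpen_interior (s := E)).isClosed_compl hLc.isClosed
      (disjoint_left.2 fun x hx hxL => hx (hLU hxL))
    have hθsm : ContDiff ℝ 1 (θ : En n → ℝ) :=
      (contMDiff_iff_contDiff.1 θ.contMDiff).of_le (by exact_mod_cast le_top)
    set Φ : En n → ℝ := fun x => φ x * θ x with hΦdef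
    -- support facts
    have hsuppΦ : tsupport Φ ⊆ tsupport φ ∩ closure E := by
      have h1 : Function.support Φ ⊆ tsupport φ ∩ U := by
        intro x hx
        have hφx : φ x ≠ 0 := fun h => hx (by simp [hΦdef, h])
        have hθx : θ x ≠ 0 := fun h => hx (by simp [hΦdef, h])
        exact ⟨subset_tsupport φ hφx, by
          by_contra hxU
          exact hθx (hθ0 hxU)⟩
      refine (closure_mono h1).trans ?_
      refine subset_trans (closure_inter_subset_inter_closure _ _) ?_
      exact inter_subset_inter ((isClosed_tsupport φ).closure_eq.subset)
        (closure_mono interior_subset)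
    have hsuppΦU : tsupport Φ ⊆ U := hsuppΦ.trans hKU
    -- Φ = φ on E
    have hΦeq : ∀ x ∈ E, Φ x = φ x := by
      intro x hxE
      by_cases hxs : x ∈ tsupport φ
      · have : x ∈ L := hKL.trans interior_subset ⟨hxs, subset_closure hxE⟩
        simp [hΦdef, hθ1 this]
      · have : φ x = 0 := image_eq_zero_of_notMem_tsupport hxs
        simp [hΦdef, this]
    -- Φ vanishes (with gradient) off E
    have hΦ0 : ∀ x, x ∉ E → Φ x = 0 ∧ gradient Φ x = 0 := by
      intro x hxE
      have hxn : x ∉ tsupport Φ := fun hx => hxE (interior_subset (hsuppΦU hx))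
      have hev : Φ =ᶠ[𝓝 x] (fun _ => (0:ℝ)) :=
        eventually_of_mem ((isClosed_tsupport Φ).isOpen_compl.mem_nhds hxn)
          (fun y hy => image_eq_zero_of_notMem_tsupport hy)
      exact ⟨image_eq_zero_of_notMem_tsupport hxn, by
        rw [hev.gradient_eq]; exact gradient_const _ _⟩
    -- gradients agree on E
    have hgrad : ∀ x ∈ E, gradient Φ x = gradient φ x := by
      intro x hxE
      by_cases hxs : x ∈ tsupport φ
      · have hxi : x ∈ interior L := hKL ⟨hxs, subset_closure hxE⟩
        have hev : Φ =ᶠ[𝓝 x] φ :=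
          eventually_of_mem (isOpen_interior.mem_nhds hxi)
            (fun y hy => by simp [hΦdef, hθ1 (interior_subset hy)])
        exact hev.gradient_eq
      · have hev : Φ =ᶠ[𝓝 x] φ :=
          eventually_of_mem ((isClosed_tsupport φ).isOpen_compl.mem_nhds hxs)
            (fun y hy => by simp [hΦdef, image_eq_zero_of_notMem_tsupport hy])
        exact hev.gradient_eq
    -- Φ is a test function
    have hΦC1 : C1c Ω Φ := by
      refine ⟨hφ.1.mul hθsm, ?_, ?_⟩
      · exact hφ.2.1.mul_right
      · exact (hsuppΦ.trans inter_subset_left).trans hφ.2.2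
    have hid := hF.2.2 Φ hΦC1
    -- rewrite the pairing integral
    have hpair : F.pairOn Set.univ (fun x => gradient Φ x) =
        F.pairOn E (fun x => gradient φ x) := by
      rw [RnMeasure.pairOn, RnMeasure.pairOn, Measure.restrict_univ]
      rw [← setIntegral_eq_integral_of_forall_compl_eq_zero (s := E)
        (fun x hx => by rw [(hΦ0 x hx).2]; simp)]
      exact setIntegral_congr_fun hE (fun x hx => by rw [hgrad x hx])
    -- rewrite the divergence integral
    have hsint : sintg divF Φ = sintgOn divF φ E := by
      rw [sintg, sintgOn]
      congr 1
      · rw [← setIntegral_eq_integral_of_forall_compl_eq_zero (s := E)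
          (fun x hx => (hΦ0 x hx).1)]
        exact setIntegral_congr_fun hE (fun x hx => hΦeq x hx)
      · rw [← setIntegral_eq_integral_of_forall_compl_eq_zero (s := E)
          (fun x hx => (hΦ0 x hx).1)]
        exact setIntegral_congr_fun hE (fun x hx => hΦeq x hx)
    rw [traceC1, ← hpair, hid, hsint]
    ring
end
end
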